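/- arXiv:2408.10697 — 2 statements merged into one kernel-verified Lean document; each statement's English description precedes it below -/
import Mathlib

section
/- Let $1 < N \le n$ and $q$ satisfy $\frac{1}{N} + \frac{1}{q} = 1$. For any $f \in C_0^\infty(\mathbb{R}^n \setminus \{x'=0\})$, the critical uncertainty type principle holds: $\int_{\mathbb{R}^n} |f|^2 dx \le N \left\| |x'|^{-1} \log|x'| \,(x'\cdot\nabla_N f) \right\|_{L^N(\mathbb{R}^n)} \, \left\| |x'| f \right\|_{L^q(\mathbb{R}^n)}$. -/
open MeasureTheory Finset

noncomputable def pnorm (N n : ℕ) (x : Fin n → ℝ) : ℝ :=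
  Real.sqrt (∑ j : Fin n, if (j : ℕ) < N then (x j) ^ 2 else 0)

noncomputable def eul (N n : ℕ) (f : (Fin n → ℝ) → ℂ) : (Fin n → ℝ) → ℂ :=
  fun x => ∑ j : Fin n, if (j : ℕ) < N then (x j : ℂ) * fderiv ℝ f x (Pi.single j 1) else 0

namespace Stmt16Aux

noncomputable section

variable (N n : ℕ)

def Q : (Fin n → ℝ) → ℝ := fun x => ∑ j : Fin n, if (j : ℕ) < N then (x j) ^ 2 else 0

def P : (Fin n → ℝ) → (Fin n → ℝ) := fun x j => if (j : ℕ) < N then x j else 0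

def LQ : (Fin n → ℝ) → ((Fin n → ℝ) →L[ℝ] ℝ) := fun x =>
  ∑ j : Fin n, (if (j : ℕ) < N then 2 * x j else 0) • ContinuousLinearMap.proj j

variable {N n}

lemma pnorm_def (x : Fin n → ℝ) : pnorm N n x = Real.sqrt (Q N n x) := rfl

lemma Q_nonneg (x : Fin n → ℝ) : 0 ≤ Q N n x :=
  Finset.sum_nonneg fun j _ => by positivity

lemma Q_eq_sq (x : Fin n → ℝ) : Q N n x = (pnorm N n x) ^ 2 :=
  (Real.sq_sqrt (Q_nonneg x)).symm

lemma pnorm_nonneg (x : Fin n → ℝ) : 0 ≤ pnorm N n x := Real.sqrt_nonneg _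

lemma pnorm_ne_iff {x : Fin n → ℝ} : pnorm N n x ≠ 0 ↔ 0 < Q N n x := by
  rw [pnorm_def, Real.sqrt_ne_zero']

lemma pnorm_pos {x : Fin n → ℝ} (h : 0 < Q N n x) : 0 < pnorm N n x := by
  rw [pnorm_def]; exact Real.sqrt_pos.2 h

lemma contDiff_Q : ContDiff ℝ (⊤ : ℕ∞) (Q N n) := by
  apply ContDiff.sum
  intro j _
  by_cases hj : (j : ℕ) < N
  · simp only [if_pos hj]
    exact ((ContinuousLinearMap.proj j : (Fin n → ℝ) →L[ℝ] ℝ).contDiff).pow 2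
  · simp only [if_neg hj]
    exact contDiff_const

lemma continuous_pnorm : Continuous (pnorm N n) :=
  Real.continuous_sqrt.comp contDiff_Q.continuous

lemma hasFDerivAt_Q (x : Fin n → ℝ) : HasFDerivAt (Q N n) (LQ N n x) x := by
  apply HasFDerivAt.fun_sum
  intro j _
  by_cases hj : (j : ℕ) < N
  · simp only [if_pos hj]
    have h : HasFDerivAt (fun y : Fin n → ℝ => y j)
        (ContinuousLinearMap.proj j : (Fin n → ℝ) →L[ℝ] ℝ) x :=
      (ContinuousLinearMap.proj j : (Fin n → ℝ) →L[ℝ] ℝ).hasFDerivAt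
    have := h.fun_mul h
    have h2 : HasFDerivAt (fun y : Fin n → ℝ => y j ^ 2)
        (x j • (ContinuousLinearMap.proj j : (Fin n → ℝ) →L[ℝ] ℝ)
          + x j • (ContinuousLinearMap.proj j : (Fin n → ℝ) →L[ℝ] ℝ)) x := by
      simpa [sq] using this
    refine h2.congr_fderiv ?_
    rw [two_mul, add_smul]
  · simp only [if_neg hj]
    simpa using hasFDerivAt_const (0:ℝ) x

lemma LQ_apply (x v : Fin n → ℝ) :
    LQ N n x v = ∑ j : Fin n, if (j : ℕ) < N then 2 * x j * v j else 0 := by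
  simp only [LQ, ContinuousLinearMap.coe_sum', Finset.sum_apply,
    ContinuousLinearMap.smul_apply, ContinuousLinearMap.proj_apply, smul_eq_mul]
  refine Finset.sum_congr rfl fun j _ => ?_
  by_cases hj : (j : ℕ) < N <;> simp [hj, mul_assoc]

lemma LQ_P (x : Fin n → ℝ) : LQ N n x (P N n x) = 2 * Q N n x := by
  rw [LQ_apply, Q, Finset.mul_sum]
  refine Finset.sum_congr rfl fun j _ => ?_
  by_cases hj : (j : ℕ) < N <;> simp [P, hj] <;> ring

lemma hasFDerivAt_pnorm {x : Fin n → ℝ} (h : 0 < Q N n x) :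
    HasFDerivAt (pnorm N n) ((1 / (2 * pnorm N n x)) • LQ N n x) x := by
  have := (Real.hasDerivAt_sqrt (ne_of_gt h)).comp_hasFDerivAt x (hasFDerivAt_Q x)
  exact this


variable (N n : ℕ)

variable {N n}
variable {f : (Fin n → ℝ) → ℂ}

section mpart

variable (f)

def m : (Fin n → ℝ) → ℝ := fun x => (f x).re * (f x).re + (f x).im * (f x).im

lemma m_eq (x : Fin n → ℝ) : m f x = ‖f x‖ ^ 2 := by
  show (f x).re * (f x).re + (f x).im * (f x).im = _
  rw [← Complex.normSq_apply, Complex.sq_norm]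

lemma m_nonneg (x : Fin n → ℝ) : 0 ≤ m f x := by rw [m_eq]; positivity

def Lm : (Fin n → ℝ) → ((Fin n → ℝ) →L[ℝ] ℝ) := fun x =>
  (2 * (f x).re) • (Complex.reCLM.comp (fderiv ℝ f x)) +
    (2 * (f x).im) • (Complex.imCLM.comp (fderiv ℝ f x))

end mpart

lemma hasFDerivAt_m (hf : ContDiff ℝ (⊤ : ℕ∞) f) (x : Fin n → ℝ) :
    HasFDerivAt (m f) (Lm f x) x := by
  have hd := (hf.differentiable (by simp) x).hasFDerivAt
  have hre : HasFDerivAt (fun y => (f y).re) (Complex.reCLM.comp (fderiv ℝ f x)) x :=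
    Complex.reCLM.hasFDerivAt.comp x hd
  have him : HasFDerivAt (fun y => (f y).im) (Complex.imCLM.comp (fderiv ℝ f x)) x :=
    Complex.imCLM.hasFDerivAt.comp x hd
  have := (hre.fun_mul hre).fun_add (him.fun_mul him)
  refine this.congr_fderiv ?_
  rw [Lm]
  module

lemma Lm_apply (x : Fin n → ℝ) (v : Fin n → ℝ) :
    Lm f x v = 2 * ((starRingEnd ℂ) (f x) * (fderiv ℝ f x v)).re := by
  simp [Lm, Complex.mul_re]
  ring

section gpart

variable (N) (f)

def gg : (Fin n → ℝ) → ℝ := fun x => (m f x) ^ ((N : ℝ)/2)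

def Cg : (Fin n → ℝ) → ((Fin n → ℝ) →L[ℝ] ℝ) := fun x =>
  ((N : ℝ)/2 * (m f x) ^ ((N : ℝ)/2 - 1)) • Lm f x

def EG : (Fin n → ℝ) → ℝ := fun x =>
  (N : ℝ) * (m f x) ^ ((N : ℝ)/2 - 1) * ((starRingEnd ℂ) (f x) * eul N n f x).re

end gpart

lemma hasFDerivAt_gg (hf : ContDiff ℝ (⊤ : ℕ∞) f) (hN : 2 ≤ N) (x : Fin n → ℝ) :
    HasFDerivAt (gg N f) (Cg N f x) x := by
  have h1 : (1:ℝ) ≤ (N:ℝ)/2 := by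
    have : (2:ℝ) ≤ (N:ℝ) := by exact_mod_cast hN
    linarith
  exact (Real.hasDerivAt_rpow_const (Or.inr h1)).comp_hasFDerivAt x (hasFDerivAt_m hf x)

lemma eul_eq (x : Fin n → ℝ) : eul N n f x = fderiv ℝ f x (P N n x) := by
  have hP : P N n x = ∑ j : Fin n, Pi.single j (P N n x j) := (Finset.univ_sum_single _).symm
  rw [hP, map_sum, eul]
  refine Finset.sum_congr rfl fun j _ => ?_
  by_cases hj : (j : ℕ) < N
  · simp only [P, if_pos hj]
    have : Pi.single j (x j) = x j • (Pi.single j (1:ℝ) : Fin n → ℝ) := by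
      ext k
      simp [Pi.single_apply]
    rw [this, ContinuousLinearMap.map_smul, Complex.real_smul]
  · simp [P, if_neg hj]


section phipart

variable (N n : ℕ)

def alp : ℝ → ℝ := fun s =>
  s⁻¹ * s ^ (-(N : ℝ)) + Real.log s * (-(N : ℝ) * s ^ (-(N : ℝ) - 1))

def phi : (Fin n → ℝ) → ℝ := fun x => Real.log (pnorm N n x) * (pnorm N n x) ^ (-(N : ℝ))

def Cphi : (Fin n → ℝ) → ((Fin n → ℝ) →L[ℝ] ℝ) := fun x =>
  alp N (pnorm N n x) • ((1 / (2 * pnorm N n x)) • LQ N n x)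

variable {N n}

def psi (N : ℕ) (f : (Fin n → ℝ) → ℂ) : (Fin n → ℝ) → ℝ := fun x => phi N n x * gg N f x

def Cpsi (N : ℕ) (f : (Fin n → ℝ) → ℂ) : (Fin n → ℝ) → ((Fin n → ℝ) →L[ℝ] ℝ) := fun x =>
  phi N n x • Cg N f x + gg N f x • Cphi N n x

def W (N : ℕ) (f : (Fin n → ℝ) → ℂ) (j : Fin n) : (Fin n → ℝ) → ℝ := fun x =>
  (if (j : ℕ) < N then x j else 0) * psi N f x

def CW (N : ℕ) (f : (Fin n → ℝ) → ℂ) (j : Fin n) : (Fin n → ℝ) → ((Fin n → ℝ) →L[ℝ] ℝ) := fun x =>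
  x j • Cpsi N f x + psi N f x • ContinuousLinearMap.proj j

def DD (N : ℕ) (f : (Fin n → ℝ) → ℂ) : (Fin n → ℝ) → ℝ := fun x =>
  (pnorm N n x) ^ (-(N : ℝ)) * gg N f x +
    Real.log (pnorm N n x) * (pnorm N n x) ^ (-(N : ℝ)) * EG N f x

end phipart

variable {f : (Fin n → ℝ) → ℂ}

lemma hasFDerivAt_phi {x : Fin n → ℝ} (h : 0 < Q N n x) :
    HasFDerivAt (phi N n) (Cphi N n x) x := by
  have hr0 : pnorm N n x ≠ 0 := ne_of_gt (pnorm_pos h)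
  have hα : HasDerivAt (fun s : ℝ => Real.log s * s ^ (-(N : ℝ)))
      (alp N (pnorm N n x)) (pnorm N n x) :=
    (Real.hasDerivAt_log hr0).mul (Real.hasDerivAt_rpow_const (Or.inl hr0))
  exact hα.comp_hasFDerivAt x (hasFDerivAt_pnorm h)

lemma hasFDerivAt_psi (hf : ContDiff ℝ (⊤ : ℕ∞) f) (hN : 2 ≤ N) {x : Fin n → ℝ}
    (h : 0 < Q N n x) : HasFDerivAt (psi N f) (Cpsi N f x) x :=
  (hasFDerivAt_phi h).mul (hasFDerivAt_gg hf hN x)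

lemma hasFDerivAt_W (hf : ContDiff ℝ (⊤ : ℕ∞) f) (hN : 2 ≤ N) {j : Fin n} (hj : (j : ℕ) < N)
    {x : Fin n → ℝ} (h : 0 < Q N n x) : HasFDerivAt (W N f j) (CW N f j x) x := by
  have hproj : HasFDerivAt (fun y : Fin n → ℝ => y j)
      (ContinuousLinearMap.proj j : (Fin n → ℝ) →L[ℝ] ℝ) x :=
    (ContinuousLinearMap.proj j : (Fin n → ℝ) →L[ℝ] ℝ).hasFDerivAt
  have := hproj.mul (hasFDerivAt_psi hf hN h)
  rw [show W N f j = fun y => y j * psi N f y from funext fun y => by simp [W, hj]]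
  exact this

lemma clm_sum_P (L : (Fin n → ℝ) →L[ℝ] ℝ) (x : Fin n → ℝ) :
    L (P N n x) = ∑ j : Fin n, if (j : ℕ) < N then x j * L (Pi.single j 1) else 0 := by
  rw [show P N n x = ∑ j, Pi.single j (P N n x j) from (Finset.univ_sum_single _).symm, map_sum]
  refine Finset.sum_congr rfl fun j _ => ?_
  by_cases hj : (j : ℕ) < N
  · simp only [P, if_pos hj]
    have hs : Pi.single j (x j) = x j • (Pi.single j (1:ℝ) : Fin n → ℝ) := by
      ext k; simp [Pi.single_apply]
    rw [hs, ContinuousLinearMap.map_smul, smul_eq_mul]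
  · simp [P, if_neg hj]

lemma Cphi_P {x : Fin n → ℝ} (h : 0 < Q N n x) :
    Cphi N n x (P N n x) = (pnorm N n x) ^ (-(N : ℝ)) -
      (N : ℝ) * Real.log (pnorm N n x) * (pnorm N n x) ^ (-(N : ℝ)) := by
  have hr : 0 < pnorm N n x := pnorm_pos h
  have hr0 : pnorm N n x ≠ 0 := ne_of_gt hr
  have h1 : Cphi N n x (P N n x)
      = alp N (pnorm N n x) * ((1 / (2 * pnorm N n x)) * (2 * Q N n x)) := by
    simp [Cphi, LQ_P, smul_eq_mul]
  have h2 : (1 / (2 * pnorm N n x)) * (2 * pnorm N n x ^ 2) = pnorm N n x := by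
    field_simp
  rw [h1, Q_eq_sq, h2]
  have h3 : (pnorm N n x) ^ (-(N : ℝ) - 1) * pnorm N n x = (pnorm N n x) ^ (-(N : ℝ)) := by
    have h4 := Real.rpow_add_one hr0 (-(N : ℝ) - 1)
    have h5 : (-(N : ℝ) - 1 + 1) = -(N : ℝ) := by ring
    rw [h5] at h4
    exact h4.symm
  have expand : alp N (pnorm N n x) * pnorm N n x
      = (pnorm N n x)⁻¹ * pnorm N n x * (pnorm N n x) ^ (-(N : ℝ))
        + (-(N : ℝ)) * Real.log (pnorm N n x) * ((pnorm N n x) ^ (-(N : ℝ) - 1) * pnorm N n x) := by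
    rw [alp]; ring
  rw [expand, h3, inv_mul_cancel₀ hr0]
  ring

lemma Cg_P {x : Fin n → ℝ} :
    Cg N f x (P N n x) = EG N f x := by
  simp only [Cg, ContinuousLinearMap.smul_apply, smul_eq_mul, Lm_apply, EG, ← eul_eq]
  ring

lemma m_zero {x : Fin n → ℝ} (hfx : f x = 0) : m f x = 0 := by simp [m, hfx]

lemma gg_zero (hN : 2 ≤ N) {x : Fin n → ℝ} (hfx : f x = 0) : gg N f x = 0 := by
  have : m f x = 0 := m_zero hfx
  rw [show gg N f x = (m f x) ^ ((N : ℝ)/2) from rfl, this]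
  apply Real.zero_rpow
  have hN0 : (0:ℝ) < (N:ℝ) := by
    have : 0 < N := lt_of_lt_of_le (by norm_num) hN
    exact_mod_cast this
  positivity

lemma EG_zero {x : Fin n → ℝ} (hfx : f x = 0) : EG N f x = 0 := by
  simp [EG, hfx]

lemma DD_zero (hN : 2 ≤ N) {x : Fin n → ℝ} (hfx : f x = 0) : DD N f x = 0 := by
  rw [show DD N f x = (pnorm N n x) ^ (-(N : ℝ)) * gg N f x +
    Real.log (pnorm N n x) * (pnorm N n x) ^ (-(N : ℝ)) * EG N f x from rfl,
    gg_zero hN hfx, EG_zero hfx]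
  ring

lemma sum_ind (hNn : N ≤ n) : (∑ j : Fin n, if (j : ℕ) < N then (1:ℝ) else 0) = N := by
  rw [Fin.sum_univ_eq_sum_range (fun j => if j < N then (1:ℝ) else 0) n]
  have h : (Finset.range n).filter (fun j => j < N) = Finset.range N := by
    ext k
    simp only [Finset.mem_filter, Finset.mem_range]
    omega
  rw [Finset.sum_ite, Finset.sum_const, Finset.sum_const_zero, h, Finset.card_range]
  simp

lemma W_zero_of_nmem (hN : 2 ≤ N) {y : Fin n → ℝ} (hy : y ∉ tsupport f) (j : Fin n) :
    W N f j y = 0 := by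
  have hfy : f y = 0 := image_eq_zero_of_notMem_tsupport hy
  rw [show W N f j y = (if (j : ℕ) < N then y j else 0) * (phi N n y * gg N f y) from rfl,
    gg_zero hN hfy]
  ring

lemma sum_fderiv_W_eq (hf : ContDiff ℝ (⊤ : ℕ∞) f) (hN : 2 ≤ N) (hNn : N ≤ n)
    (hsupp : tsupport f ⊆ {x | pnorm N n x ≠ 0}) (x : Fin n → ℝ) :
    ∑ j : Fin n, fderiv ℝ (W N f j) x (Pi.single j 1) = DD N f x := by
  by_cases hx : 0 < Q N n x
  · have hder : ∀ j : Fin n, fderiv ℝ (W N f j) x (Pi.single j 1)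
        = if (j : ℕ) < N then x j * Cpsi N f x (Pi.single j 1) + psi N f x else 0 := by
      intro j
      by_cases hj : (j : ℕ) < N
      · rw [(hasFDerivAt_W hf hN hj hx).fderiv, if_pos hj]
        simp [CW, ContinuousLinearMap.add_apply, ContinuousLinearMap.smul_apply, smul_eq_mul,
          ContinuousLinearMap.proj_apply, Pi.single_eq_same]
      · rw [if_neg hj]
        have hzero : W N f j = fun _ => (0:ℝ) := funext fun y => by simp [W, hj]
        rw [hzero]
        simp
    rw [Finset.sum_congr rfl (fun j _ => hder j)]
    have split : ∀ j : Fin n,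
        (if (j : ℕ) < N then x j * Cpsi N f x (Pi.single j 1) + psi N f x else 0)
        = (if (j : ℕ) < N then x j * Cpsi N f x (Pi.single j 1) else 0)
          + (if (j : ℕ) < N then (1:ℝ) else 0) * psi N f x := by
      intro j
      by_cases hj : (j : ℕ) < N <;> simp [hj]
    rw [Finset.sum_congr rfl (fun j _ => split j), Finset.sum_add_distrib, ← Finset.sum_mul,
      sum_ind hNn, ← clm_sum_P]
    have hCp : Cpsi N f x (P N n x) = phi N n x * EG N f x
        + gg N f x * ((pnorm N n x) ^ (-(N : ℝ))
          - (N : ℝ) * Real.log (pnorm N n x) * (pnorm N n x) ^ (-(N : ℝ))) := by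
      rw [show Cpsi N f x (P N n x)
          = phi N n x * (Cg N f x (P N n x)) + gg N f x * (Cphi N n x (P N n x)) from by
        simp [Cpsi, ContinuousLinearMap.add_apply, ContinuousLinearMap.smul_apply, smul_eq_mul]]
      rw [Cg_P, Cphi_P hx]
    rw [hCp]
    rw [show DD N f x = (pnorm N n x) ^ (-(N : ℝ)) * gg N f x +
      Real.log (pnorm N n x) * (pnorm N n x) ^ (-(N : ℝ)) * EG N f x from rfl,
      show psi N f x = phi N n x * gg N f x from rfl,
      show phi N n x = Real.log (pnorm N n x) * (pnorm N n x) ^ (-(N : ℝ)) from rfl]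
    ring
  · have hp0 : pnorm N n x = 0 := by
      by_contra hne
      exact hx (pnorm_ne_iff.1 hne)
    have hxV : x ∉ tsupport f := fun hmem => (hsupp hmem) hp0
    have hVopen : IsOpen (tsupport f)ᶜ := (isClosed_tsupport f).isOpen_compl
    have hfx : f x = 0 := image_eq_zero_of_notMem_tsupport hxV
    have hterm : ∀ j : Fin n, fderiv ℝ (W N f j) x (Pi.single j 1) = 0 := by
      intro j
      have hev : W N f j =ᶠ[nhds x] (fun _ => (0:ℝ)) := by
        filter_upwards [hVopen.mem_nhds hxV] with y hy
        exact W_zero_of_nmem hN hy j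
      rw [hev.fderiv_eq]
      simp
    rw [Finset.sum_congr rfl (fun j _ => hterm j), Finset.sum_const, DD_zero hN hfx]
    simp


-- Continuity lemmas

lemma isOpen_O : IsOpen {x : Fin n → ℝ | 0 < Q N n x} :=
  isOpen_lt continuous_const contDiff_Q.continuous

lemma continuous_m (hf : ContDiff ℝ (⊤ : ℕ∞) f) : Continuous (m f) := by
  have hc := hf.continuous
  exact ((Complex.continuous_re.comp hc).mul (Complex.continuous_re.comp hc)).add
    ((Complex.continuous_im.comp hc).mul (Complex.continuous_im.comp hc))

lemma continuous_m_rpow (hf : ContDiff ℝ (⊤ : ℕ∞) f) {e : ℝ} (he : 0 ≤ e) :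
    Continuous (fun x => (m f x) ^ e) := by
  rw [continuous_iff_continuousAt]
  intro x
  exact (Real.continuousAt_rpow_const _ _ (Or.inr he)).comp (continuous_m hf).continuousAt

lemma continuous_gg (hf : ContDiff ℝ (⊤ : ℕ∞) f) : Continuous (gg N f) :=
  continuous_m_rpow hf (by positivity)

lemma continuous_P : Continuous (P N n) := by
  apply continuous_pi
  intro j
  by_cases hj : (j : ℕ) < N
  · simpa [P, hj] using continuous_apply j
  · simpa [P, hj] using continuous_const

lemma continuous_eul (hf : ContDiff ℝ (⊤ : ℕ∞) f) : Continuous (eul N n f) := by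
  have : eul N n f = fun x => fderiv ℝ f x (P N n x) := funext fun x => eul_eq x
  rw [this]
  exact (hf.continuous_fderiv (by simp)).clm_apply continuous_P

lemma continuous_EG (hf : ContDiff ℝ (⊤ : ℕ∞) f) (hN : 2 ≤ N) : Continuous (EG N f) := by
  have he : (0:ℝ) ≤ (N : ℝ)/2 - 1 := by
    have : (2:ℝ) ≤ (N:ℝ) := by exact_mod_cast hN
    linarith
  refine (continuous_const.mul (continuous_m_rpow hf he)).mul ?_
  exact Complex.continuous_re.comp ((continuous_star.comp hf.continuous).mul (continuous_eul hf))

lemma eul_zero_of_nmem {y : Fin n → ℝ} (hy : y ∉ tsupport f) : eul N n f y = 0 := by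
  have hev : f =ᶠ[nhds y] (fun _ => (0:ℂ)) := by
    filter_upwards [(isClosed_tsupport f).isOpen_compl.mem_nhds hy] with z hz
    exact image_eq_zero_of_notMem_tsupport hz
  have hfd : fderiv ℝ f y = 0 := by rw [hev.fderiv_eq]; simp
  rw [eul_eq, hfd]
  simp

lemma nmem_of_Q_nonpos (hsupp : tsupport f ⊆ {x | pnorm N n x ≠ 0}) {x : Fin n → ℝ}
    (hx : ¬ 0 < Q N n x) : x ∉ tsupport f := by
  intro hmem
  exact (hsupp hmem) (by
    by_contra hne
    exact hx (pnorm_ne_iff.1 hne))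

lemma continuous_glue (hsupp : tsupport f ⊆ {x | pnorm N n x ≠ 0}) {h : (Fin n → ℝ) → ℝ}
    (hcont : ContinuousOn h {x | 0 < Q N n x}) (hzero : ∀ y ∉ tsupport f, h y = 0) :
    Continuous h := by
  rw [continuous_iff_continuousAt]
  intro x
  by_cases hx : 0 < Q N n x
  · exact hcont.continuousAt (isOpen_O.mem_nhds hx)
  · have hxV : x ∉ tsupport f := nmem_of_Q_nonpos hsupp hx
    apply Filter.EventuallyEq.continuousAt (y := 0)
    filter_upwards [(isClosed_tsupport f).isOpen_compl.mem_nhds hxV] with z hz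
    exact hzero z hz

lemma contOn_pnorm_rpow (e : ℝ) :
    ContinuousOn (fun x => (pnorm N n x) ^ e) {x : Fin n → ℝ | 0 < Q N n x} := by
  intro x hx
  exact ((Real.continuousAt_rpow_const _ _ (Or.inl (ne_of_gt (pnorm_pos hx)))).comp
    continuous_pnorm.continuousAt).continuousWithinAt

lemma contOn_log_pnorm :
    ContinuousOn (fun x => Real.log (pnorm N n x)) {x : Fin n → ℝ | 0 < Q N n x} := by
  intro x hx
  exact ((Real.continuousAt_log (ne_of_gt (pnorm_pos hx))).comp
    continuous_pnorm.continuousAt).continuousWithinAt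

lemma contOn_phi : ContinuousOn (phi N n) {x : Fin n → ℝ | 0 < Q N n x} :=
  contOn_log_pnorm.mul (contOn_pnorm_rpow _)

lemma continuous_W (hf : ContDiff ℝ (⊤ : ℕ∞) f) (hN : 2 ≤ N)
    (hsupp : tsupport f ⊆ {x | pnorm N n x ≠ 0}) (j : Fin n) : Continuous (W N f j) := by
  apply continuous_glue hsupp
  · apply ContinuousOn.mul
    · by_cases hj : (j : ℕ) < N
      · simpa [W, hj] using (continuous_apply j).continuousOn
      · simpa [W, hj] using continuousOn_const
    · exact contOn_phi.mul (continuous_gg hf).continuousOn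
  · exact fun y hy => W_zero_of_nmem hN hy j


lemma fderiv_W_apply_on_O (hf : ContDiff ℝ (⊤ : ℕ∞) f) (hN : 2 ≤ N) {j : Fin n} {x : Fin n → ℝ}
    (hx : 0 < Q N n x) :
    fderiv ℝ (W N f j) x (Pi.single j 1)
      = if (j : ℕ) < N then x j * Cpsi N f x (Pi.single j 1) + psi N f x else 0 := by
  by_cases hj : (j : ℕ) < N
  · rw [(hasFDerivAt_W hf hN hj hx).fderiv, if_pos hj]
    simp [CW, ContinuousLinearMap.add_apply, ContinuousLinearMap.smul_apply, smul_eq_mul,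
      ContinuousLinearMap.proj_apply, Pi.single_eq_same]
  · rw [if_neg hj]
    have hzero : W N f j = fun _ => (0:ℝ) := funext fun y => by simp [W, hj]
    rw [hzero]
    simp

lemma fderiv_W_zero_of_nmem (hN : 2 ≤ N) {j : Fin n} {x : Fin n → ℝ}
    (hx : x ∉ tsupport f) : fderiv ℝ (W N f j) x (Pi.single j 1) = 0 := by
  have hev : W N f j =ᶠ[nhds x] (fun _ => (0:ℝ)) := by
    filter_upwards [(isClosed_tsupport f).isOpen_compl.mem_nhds hx] with y hy
    exact W_zero_of_nmem hN hy j
  rw [hev.fderiv_eq]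
  simp

lemma continuous_LQ_apply (v : Fin n → ℝ) : Continuous (fun x => LQ N n x v) := by
  have : (fun x => LQ N n x v)
      = fun x => ∑ j : Fin n, if (j : ℕ) < N then 2 * x j * v j else 0 :=
    funext fun x => LQ_apply x v
  rw [this]
  apply continuous_finset_sum
  intro j _
  by_cases hj : (j : ℕ) < N
  · simp only [if_pos hj]
    exact ((continuous_const.mul (continuous_apply j)).mul continuous_const)
  · simpa [hj] using continuous_const

lemma contOn_alp : ContinuousOn (fun x => alp N (pnorm N n x)) {x : Fin n → ℝ | 0 < Q N n x} := by
  simp only [alp]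
  apply ContinuousOn.add
  · exact (ContinuousOn.inv₀ continuous_pnorm.continuousOn
      (fun x hx => ne_of_gt (pnorm_pos hx))).mul (contOn_pnorm_rpow _)
  · exact contOn_log_pnorm.mul (continuousOn_const.mul (contOn_pnorm_rpow _))

lemma contOn_Cphi_apply (v : Fin n → ℝ) :
    ContinuousOn (fun x => Cphi N n x v) {x : Fin n → ℝ | 0 < Q N n x} := by
  have : (fun x => Cphi N n x v)
      = fun x => alp N (pnorm N n x) * ((1 / (2 * pnorm N n x)) * (LQ N n x v)) :=
    funext fun x => by simp [Cphi, smul_eq_mul]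
  rw [this]
  refine contOn_alp.mul (ContinuousOn.mul ?_ (continuous_LQ_apply v).continuousOn)
  exact ContinuousOn.div continuousOn_const
    ((continuous_const.mul continuous_pnorm).continuousOn)
    (fun x hx => by
      have := pnorm_pos hx
      positivity)

lemma continuous_Lm_apply (hf : ContDiff ℝ (⊤ : ℕ∞) f) (v : Fin n → ℝ) :
    Continuous (fun x => Lm f x v) := by
  have : (fun x => Lm f x v)
      = fun x => 2 * ((starRingEnd ℂ) (f x) * (fderiv ℝ f x v)).re :=
    funext fun x => Lm_apply x v
  rw [this]
  exact continuous_const.mul (Complex.continuous_re.comp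
    ((continuous_star.comp hf.continuous).mul
      ((hf.continuous_fderiv (by simp)).clm_apply continuous_const)))

lemma continuous_Cg_apply (hf : ContDiff ℝ (⊤ : ℕ∞) f) (hN : 2 ≤ N) (v : Fin n → ℝ) :
    Continuous (fun x => Cg N f x v) := by
  have : (fun x => Cg N f x v)
      = fun x => ((N : ℝ)/2 * (m f x) ^ ((N : ℝ)/2 - 1)) * Lm f x v :=
    funext fun x => by simp [Cg, smul_eq_mul]
  rw [this]
  have he : (0:ℝ) ≤ (N : ℝ)/2 - 1 := by
    have : (2:ℝ) ≤ (N:ℝ) := by exact_mod_cast hN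
    linarith
  exact (continuous_const.mul (continuous_m_rpow hf he)).mul (continuous_Lm_apply hf v)

lemma contOn_Cpsi_apply (hf : ContDiff ℝ (⊤ : ℕ∞) f) (hN : 2 ≤ N) (v : Fin n → ℝ) :
    ContinuousOn (fun x => Cpsi N f x v) {x : Fin n → ℝ | 0 < Q N n x} := by
  have : (fun x => Cpsi N f x v)
      = fun x => phi N n x * (Cg N f x v) + gg N f x * (Cphi N n x v) :=
    funext fun x => by simp [Cpsi, ContinuousLinearMap.add_apply,
      ContinuousLinearMap.smul_apply, smul_eq_mul]
  rw [this]
  exact (contOn_phi.mul (continuous_Cg_apply hf hN v).continuousOn).add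
    ((continuous_gg hf).continuousOn.mul (contOn_Cphi_apply v))

lemma contOn_psi (hf : ContDiff ℝ (⊤ : ℕ∞) f) :
    ContinuousOn (psi N f) {x : Fin n → ℝ | 0 < Q N n x} :=
  contOn_phi.mul (continuous_gg hf).continuousOn

lemma continuous_fderiv_W (hf : ContDiff ℝ (⊤ : ℕ∞) f) (hN : 2 ≤ N)
    (hsupp : tsupport f ⊆ {x | pnorm N n x ≠ 0}) (j : Fin n) :
    Continuous (fun x => fderiv ℝ (W N f j) x (Pi.single j 1)) := by
  rw [continuous_iff_continuousAt]
  intro x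
  by_cases hx : 0 < Q N n x
  · have htau : ContinuousAt
        (fun y => if (j : ℕ) < N then y j * Cpsi N f y (Pi.single j 1) + psi N f y else 0) x := by
      by_cases hj : (j : ℕ) < N
      · simp only [if_pos hj]
        exact ((continuous_apply j).continuousAt.mul
          ((contOn_Cpsi_apply hf hN _).continuousAt (isOpen_O.mem_nhds hx))).add
          ((contOn_psi hf).continuousAt (isOpen_O.mem_nhds hx))
      · simp only [if_neg hj]
        exact continuousAt_const
    apply htau.congr
    filter_upwards [isOpen_O.mem_nhds hx] with y hy
    exact (fderiv_W_apply_on_O hf hN hy).symm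
  · have hxV : x ∉ tsupport f := nmem_of_Q_nonpos hsupp hx
    apply Filter.EventuallyEq.continuousAt (y := 0)
    filter_upwards [(isClosed_tsupport f).isOpen_compl.mem_nhds hxV] with z hz
    exact fderiv_W_zero_of_nmem hN hz

lemma continuous_F1 (hf : ContDiff ℝ (⊤ : ℕ∞) f) (hN : 2 ≤ N)
    (hsupp : tsupport f ⊆ {x | pnorm N n x ≠ 0}) :
    Continuous (fun x => (pnorm N n x) ^ (-(N : ℝ)) * gg N f x) := by
  apply continuous_glue hsupp ((contOn_pnorm_rpow _).mul (continuous_gg hf).continuousOn)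
  intro y hy
  simp only [Pi.mul_apply]
  rw [gg_zero hN (image_eq_zero_of_notMem_tsupport hy)]
  ring

lemma continuous_F2 (hf : ContDiff ℝ (⊤ : ℕ∞) f) (hN : 2 ≤ N)
    (hsupp : tsupport f ⊆ {x | pnorm N n x ≠ 0}) :
    Continuous (fun x =>
      Real.log (pnorm N n x) * (pnorm N n x) ^ (-(N : ℝ)) * EG N f x) := by
  apply continuous_glue hsupp
    (((contOn_log_pnorm.mul (contOn_pnorm_rpow _))).mul (continuous_EG hf hN).continuousOn)
  intro y hy
  simp only [Pi.mul_apply]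
  rw [EG_zero (image_eq_zero_of_notMem_tsupport hy)]
  ring

lemma continuous_b (hf : ContDiff ℝ (⊤ : ℕ∞) f)
    (hsupp : tsupport f ⊆ {x | pnorm N n x ≠ 0}) :
    Continuous (fun x => ‖f x‖ / pnorm N n x) := by
  apply continuous_glue hsupp
    (ContinuousOn.div hf.continuous.norm.continuousOn continuous_pnorm.continuousOn
      (fun x hx => ne_of_gt (pnorm_pos hx)))
  intro y hy
  have := image_eq_zero_of_notMem_tsupport (f := f) hy
  simp [Pi.div_apply, this]

lemma continuous_a (hf : ContDiff ℝ (⊤ : ℕ∞) f)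
    (hsupp : tsupport f ⊆ {x | pnorm N n x ≠ 0}) :
    Continuous (fun x => |Real.log (pnorm N n x)| * ‖eul N n f x‖ / pnorm N n x) := by
  apply continuous_glue hsupp
    (ContinuousOn.div (contOn_log_pnorm.abs.mul (continuous_eul hf).norm.continuousOn)
      continuous_pnorm.continuousOn (fun x hx => ne_of_gt (pnorm_pos hx)))
  intro y hy
  have := eul_zero_of_nmem (f := f) (N := N) hy
  simp [Pi.div_apply, this]


-- Integrability and the divergence theorem step

lemma hasCompactSupport_of_zero (hcs : HasCompactSupport f) {h : (Fin n → ℝ) → ℝ}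
    (hz : ∀ y ∉ tsupport f, h y = 0) : HasCompactSupport h :=
  HasCompactSupport.intro hcs hz

lemma integrable_fderiv_W (hf : ContDiff ℝ (⊤ : ℕ∞) f) (hN : 2 ≤ N) (hcs : HasCompactSupport f)
    (hsupp : tsupport f ⊆ {x | pnorm N n x ≠ 0}) (j : Fin n) :
    Integrable (fun x => fderiv ℝ (W N f j) x (Pi.single j 1)) :=
  (continuous_fderiv_W hf hN hsupp j).integrable_of_hasCompactSupport
    (hasCompactSupport_of_zero hcs (fun y hy => fderiv_W_zero_of_nmem hN hy))

lemma differentiable_W (hf : ContDiff ℝ (⊤ : ℕ∞) f) (hN : 2 ≤ N)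
    (hsupp : tsupport f ⊆ {x | pnorm N n x ≠ 0}) (j : Fin n) :
    Differentiable ℝ (W N f j) := by
  intro x
  by_cases hx : 0 < Q N n x
  · by_cases hj : (j : ℕ) < N
    · exact (hasFDerivAt_W hf hN hj hx).differentiableAt
    · have hzero : W N f j = fun _ => (0:ℝ) := funext fun y => by simp [W, hj]
      rw [hzero]
      exact differentiableAt_const 0
  · have hxV : x ∉ tsupport f := nmem_of_Q_nonpos hsupp hx
    have hev : W N f j =ᶠ[nhds x] (fun _ => (0:ℝ)) := by
      filter_upwards [(isClosed_tsupport f).isOpen_compl.mem_nhds hxV] with y hy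
      exact W_zero_of_nmem hN hy j
    exact ((hasFDerivAt_const (0:ℝ) x).congr_of_eventuallyEq hev).differentiableAt

lemma integral_fderiv_W (hf : ContDiff ℝ (⊤ : ℕ∞) f) (hN : 2 ≤ N) (hcs : HasCompactSupport f)
    (hsupp : tsupport f ⊆ {x | pnorm N n x ≠ 0}) (j : Fin n) :
    ∫ x : Fin n → ℝ, fderiv ℝ (W N f j) x (Pi.single j 1) = 0 := by
  have hint : Integrable (W N f j) :=
    (continuous_W hf hN hsupp j).integrable_of_hasCompactSupport
      (hasCompactSupport_of_zero hcs (fun y hy => W_zero_of_nmem hN hy j))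
  have h1 : Integrable (fun x : Fin n → ℝ =>
      fderiv ℝ (fun _ : Fin n → ℝ => (1:ℝ)) x (Pi.single j 1) * W N f j x) := by
    have : (fun x : Fin n → ℝ =>
        fderiv ℝ (fun _ : Fin n → ℝ => (1:ℝ)) x (Pi.single j 1) * W N f j x)
        = fun _ => 0 := by
      funext x
      simp
    rw [this]
    exact integrable_zero _ _ _
  have h2 : Integrable (fun x : Fin n → ℝ =>
      (1:ℝ) * fderiv ℝ (W N f j) x (Pi.single j 1)) := by
    simpa [one_mul] using integrable_fderiv_W hf hN hcs hsupp j
  have h3 : Integrable (fun x : Fin n → ℝ => (1:ℝ) * W N f j x) := by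
    simpa [one_mul] using hint
  have key := integral_mul_fderiv_eq_neg_fderiv_mul_of_integrable h1 h2 h3
    (fun x _ => differentiableAt_const (1:ℝ)) (fun x _ => differentiable_W hf hN hsupp j x)
  simp only [one_mul] at key
  rw [key]
  have : (fun x : Fin n → ℝ =>
      fderiv ℝ (fun _ : Fin n → ℝ => (1:ℝ)) x (Pi.single j 1) * W N f j x) = fun _ => 0 := by
    funext x
    simp
  rw [this]
  simp

lemma integral_DD_zero (hf : ContDiff ℝ (⊤ : ℕ∞) f) (hN : 2 ≤ N) (hNn : N ≤ n)
    (hcs : HasCompactSupport f) (hsupp : tsupport f ⊆ {x | pnorm N n x ≠ 0}) :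
    ∫ x : Fin n → ℝ, DD N f x = 0 := by
  have h1 : (fun x : Fin n → ℝ => DD N f x)
      = fun x => ∑ j : Fin n, fderiv ℝ (W N f j) x (Pi.single j 1) :=
    funext fun x => (sum_fderiv_W_eq hf hN hNn hsupp x).symm
  rw [h1, integral_finset_sum _ (fun j _ => integrable_fderiv_W hf hN hcs hsupp j)]
  simp [integral_fderiv_W hf hN hcs hsupp]

lemma integral_F1_eq (hf : ContDiff ℝ (⊤ : ℕ∞) f) (hN : 2 ≤ N) (hNn : N ≤ n)
    (hcs : HasCompactSupport f) (hsupp : tsupport f ⊆ {x | pnorm N n x ≠ 0}) :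
    ∫ x : Fin n → ℝ, (pnorm N n x) ^ (-(N : ℝ)) * gg N f x
      = - ∫ x : Fin n → ℝ,
          Real.log (pnorm N n x) * (pnorm N n x) ^ (-(N : ℝ)) * EG N f x := by
  have hi1 : Integrable (fun x : Fin n → ℝ => (pnorm N n x) ^ (-(N : ℝ)) * gg N f x) :=
    (continuous_F1 hf hN hsupp).integrable_of_hasCompactSupport
      (hasCompactSupport_of_zero hcs (fun y hy => by
        rw [gg_zero hN (image_eq_zero_of_notMem_tsupport hy)]; ring))
  have hi2 : Integrable (fun x : Fin n → ℝ =>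
      Real.log (pnorm N n x) * (pnorm N n x) ^ (-(N : ℝ)) * EG N f x) :=
    (continuous_F2 hf hN hsupp).integrable_of_hasCompactSupport
      (hasCompactSupport_of_zero hcs (fun y hy => by
        rw [EG_zero (image_eq_zero_of_notMem_tsupport hy)]; ring))
  have hDD : ∫ x : Fin n → ℝ, DD N f x
      = (∫ x : Fin n → ℝ, (pnorm N n x) ^ (-(N : ℝ)) * gg N f x)
        + ∫ x : Fin n → ℝ,
            Real.log (pnorm N n x) * (pnorm N n x) ^ (-(N : ℝ)) * EG N f x := by
    rw [← integral_add hi1 hi2]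
    rfl
  have h0 := integral_DD_zero hf hN hNn hcs hsupp
  rw [hDD] at h0
  linarith


-- Pointwise algebra lemmas

lemma gg_eq_norm_rpow (x : Fin n → ℝ) : gg N f x = ‖f x‖ ^ (N : ℝ) := by
  rw [show gg N f x = (m f x) ^ ((N : ℝ)/2) from rfl, m_eq,
    ← Real.rpow_natCast ‖f x‖ 2, ← Real.rpow_mul (norm_nonneg _)]
  congr 1
  push_cast
  ring

lemma b_pow_eq (hN : 2 ≤ N) (x : Fin n → ℝ) :
    (‖f x‖ / pnorm N n x) ^ (N : ℝ) = (pnorm N n x) ^ (-(N : ℝ)) * gg N f x := by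
  have hNne : (N : ℝ) ≠ 0 := by positivity
  by_cases hr : pnorm N n x = 0
  · rw [hr, div_zero, Real.zero_rpow hNne, Real.zero_rpow (by simpa using hNne), zero_mul]
  · rw [Real.div_rpow (norm_nonneg _) (pnorm_nonneg _), gg_eq_norm_rpow,
      Real.rpow_neg (pnorm_nonneg _), div_eq_mul_inv, mul_comm]

lemma re_conj_le (z w : ℂ) : |((starRingEnd ℂ) z * w).re| ≤ ‖z‖ * ‖w‖ := by
  calc |((starRingEnd ℂ) z * w).re| ≤ ‖(starRingEnd ℂ) z * w‖ :=
        Complex.abs_re_le_norm _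
    _ = ‖z‖ * ‖w‖ := by rw [norm_mul, Complex.norm_conj]

lemma F2_abs_le (hN : 2 ≤ N) (x : Fin n → ℝ) :
    |Real.log (pnorm N n x) * (pnorm N n x) ^ (-(N : ℝ)) * EG N f x|
      ≤ (N : ℝ) * ((|Real.log (pnorm N n x)| * ‖eul N n f x‖ / pnorm N n x)
          * (‖f x‖ / pnorm N n x) ^ ((N : ℝ) - 1)) := by
  have hrn : (0:ℝ) ≤ pnorm N n x := pnorm_nonneg x
  have hRHS : (0:ℝ) ≤ (N : ℝ) * ((|Real.log (pnorm N n x)| * ‖eul N n f x‖ / pnorm N n x)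
      * (‖f x‖ / pnorm N n x) ^ ((N : ℝ) - 1)) := by
    apply mul_nonneg (by positivity)
    apply mul_nonneg
    · exact div_nonneg (mul_nonneg (abs_nonneg _) (norm_nonneg _)) hrn
    · exact Real.rpow_nonneg (div_nonneg (norm_nonneg _) hrn) _
  by_cases hfx : f x = 0
  · rw [EG_zero hfx, mul_zero, abs_zero]
    exact hRHS
  by_cases hr0 : pnorm N n x = 0
  · rw [hr0, Real.log_zero, zero_mul, zero_mul, abs_zero]
    simp
  have hr : 0 < pnorm N n x := lt_of_le_of_ne hrn (Ne.symm hr0)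
  have hfn : 0 < ‖f x‖ := norm_pos_iff.2 hfx
  have hmnn : (0:ℝ) ≤ (m f x) ^ ((N : ℝ)/2 - 1) := Real.rpow_nonneg (m_nonneg f x) _
  have hEG : |EG N f x| ≤ (N : ℝ) * (m f x) ^ ((N : ℝ)/2 - 1) * (‖f x‖ * ‖eul N n f x‖) := by
    rw [show EG N f x = (N : ℝ) * (m f x) ^ ((N : ℝ)/2 - 1)
        * ((starRingEnd ℂ) (f x) * eul N n f x).re from rfl, abs_mul,
      abs_of_nonneg (by positivity : (0:ℝ) ≤ (N : ℝ) * (m f x) ^ ((N : ℝ)/2 - 1))]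
    exact mul_le_mul_of_nonneg_left (re_conj_le _ _) (by positivity)
  have hmpow : (m f x) ^ ((N : ℝ)/2 - 1) = ‖f x‖ ^ ((N : ℝ) - 2) := by
    rw [m_eq, ← Real.rpow_natCast ‖f x‖ 2, ← Real.rpow_mul (norm_nonneg _)]
    congr 1
    push_cast
    ring
  have hrpnn : (0:ℝ) ≤ (pnorm N n x) ^ (-(N : ℝ)) := Real.rpow_nonneg hrn _
  have step1 : |Real.log (pnorm N n x) * (pnorm N n x) ^ (-(N : ℝ)) * EG N f x|
      = |Real.log (pnorm N n x)| * (pnorm N n x) ^ (-(N : ℝ)) * |EG N f x| := by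
    rw [abs_mul, abs_mul, abs_of_nonneg hrpnn]
  rw [step1]
  have step2 : |Real.log (pnorm N n x)| * (pnorm N n x) ^ (-(N : ℝ)) * |EG N f x|
      ≤ |Real.log (pnorm N n x)| * (pnorm N n x) ^ (-(N : ℝ))
        * ((N : ℝ) * (m f x) ^ ((N : ℝ)/2 - 1) * (‖f x‖ * ‖eul N n f x‖)) :=
    mul_le_mul_of_nonneg_left hEG (by positivity)
  refine le_trans step2 (le_of_eq ?_)
  rw [hmpow]
  have e1 : (‖f x‖ / pnorm N n x) ^ ((N : ℝ) - 1)
      = ‖f x‖ ^ ((N : ℝ) - 1) * (pnorm N n x) ^ (-((N : ℝ) - 1)) := by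
    rw [Real.div_rpow (norm_nonneg _) hrn, Real.rpow_neg hrn, div_eq_mul_inv]
  have e2 : ‖f x‖ ^ ((N : ℝ) - 2) * ‖f x‖ = ‖f x‖ ^ ((N : ℝ) - 1) := by
    have := Real.rpow_add_one (ne_of_gt hfn) ((N : ℝ) - 2)
    rw [show (N : ℝ) - 2 + 1 = (N : ℝ) - 1 by ring] at this
    exact this.symm
  have e3 : (pnorm N n x) ^ (-(N : ℝ))
      = (pnorm N n x) ^ (-((N : ℝ) - 1)) * (pnorm N n x)⁻¹ := by
    rw [← Real.rpow_neg_one (pnorm N n x), ← Real.rpow_add hr]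
    congr 1
    ring
  rw [e1, e3, ← e2]
  field_simp


lemma H_le (hf : ContDiff ℝ (⊤ : ℕ∞) f) (hN : 2 ≤ N) (hNn : N ≤ n)
    (hcs : HasCompactSupport f) (hsupp : tsupport f ⊆ {x | pnorm N n x ≠ 0}) :
    (∫ x : Fin n → ℝ, (‖f x‖ / pnorm N n x) ^ (N : ℝ))
      ≤ (N : ℝ) * (∫ x : Fin n → ℝ,
            (|Real.log (pnorm N n x)| * ‖eul N n f x‖ / pnorm N n x) ^ (N : ℝ)) ^ (1/(N : ℝ))
        * (∫ x : Fin n → ℝ, (‖f x‖ / pnorm N n x) ^ (N : ℝ)) ^ (1 - 1/(N : ℝ)) := by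
  have hN1R : (1:ℝ) < (N : ℝ) := by
    have : (2:ℝ) ≤ (N:ℝ) := by exact_mod_cast hN
    linarith
  have hb_cont := continuous_b hf hsupp
  have ha_cont := continuous_a hf hsupp
  have hb1_cont : Continuous (fun x => (‖f x‖ / pnorm N n x) ^ ((N : ℝ) - 1)) := by
    rw [continuous_iff_continuousAt]
    intro x
    exact (Real.continuousAt_rpow_const _ _ (Or.inr (by linarith))).comp hb_cont.continuousAt
  have hb_zero : ∀ y ∉ tsupport f, ‖f y‖ / pnorm N n y = 0 := fun y hy => by
    rw [image_eq_zero_of_notMem_tsupport hy]; simp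
  have ha_zero : ∀ y ∉ tsupport f,
      |Real.log (pnorm N n y)| * ‖eul N n f y‖ / pnorm N n y = 0 := fun y hy => by
    rw [eul_zero_of_nmem hy]; simp
  have hb1_zero : ∀ y ∉ tsupport f, (‖f y‖ / pnorm N n y) ^ ((N : ℝ) - 1) = 0 := fun y hy => by
    rw [hb_zero y hy]
    exact Real.zero_rpow (by intro h; linarith [h])
  have ha_nonneg : ∀ x, 0 ≤ |Real.log (pnorm N n x)| * ‖eul N n f x‖ / pnorm N n x := fun x =>
    div_nonneg (mul_nonneg (abs_nonneg _) (norm_nonneg _)) (pnorm_nonneg x)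
  have hb_nonneg : ∀ x, 0 ≤ ‖f x‖ / pnorm N n x := fun x =>
    div_nonneg (norm_nonneg _) (pnorm_nonneg x)
  have hi2 : Integrable (fun x : Fin n → ℝ =>
      Real.log (pnorm N n x) * (pnorm N n x) ^ (-(N : ℝ)) * EG N f x) :=
    (continuous_F2 hf hN hsupp).integrable_of_hasCompactSupport
      (hasCompactSupport_of_zero hcs (fun y hy => by
        rw [EG_zero (image_eq_zero_of_notMem_tsupport hy)]; ring))
  have hintNab : Integrable (fun x : Fin n → ℝ => (N : ℝ) *
      ((|Real.log (pnorm N n x)| * ‖eul N n f x‖ / pnorm N n x)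
        * (‖f x‖ / pnorm N n x) ^ ((N : ℝ) - 1))) :=
    (continuous_const.mul (ha_cont.mul hb1_cont)).integrable_of_hasCompactSupport
      (hasCompactSupport_of_zero hcs (fun y hy => by
        simp only [Pi.mul_apply]
        rw [ha_zero y hy]; simp))
  set q2 : ℝ := (N : ℝ) / ((N : ℝ) - 1) with hq2def
  have hpq2 : Real.HolderConjugate (N : ℝ) q2 := by
    rw [Real.holderConjugate_iff]
    constructor
    · exact hN1R
    · rw [hq2def, inv_div]
      field_simp
      ring
  have hHolder2 := integral_mul_le_Lp_mul_Lq_of_nonneg (μ := volume) hpq2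
    (ae_of_all _ ha_nonneg)
    (ae_of_all _ (fun x => Real.rpow_nonneg (hb_nonneg x) _))
    (ha_cont.memLp_of_hasCompactSupport (hasCompactSupport_of_zero hcs ha_zero))
    (hb1_cont.memLp_of_hasCompactSupport (hasCompactSupport_of_zero hcs hb1_zero))
  have hq2_eq : (∫ x : Fin n → ℝ, ((‖f x‖ / pnorm N n x) ^ ((N : ℝ) - 1)) ^ q2)
      = ∫ x : Fin n → ℝ, (‖f x‖ / pnorm N n x) ^ (N : ℝ) := by
    apply integral_congr_ae
    apply ae_of_all
    intro x
    show ((‖f x‖ / pnorm N n x) ^ ((N : ℝ) - 1)) ^ q2 = (‖f x‖ / pnorm N n x) ^ (N : ℝ)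
    rw [← Real.rpow_mul (hb_nonneg x)]
    congr 1
    rw [hq2def]
    have hne : (N : ℝ) - 1 ≠ 0 := by
      intro h
      linarith
    field_simp
  have h1q2 : (1:ℝ)/q2 = 1 - 1/(N : ℝ) := by
    rw [hq2def, one_div_div]
    field_simp
  calc (∫ x : Fin n → ℝ, (‖f x‖ / pnorm N n x) ^ (N : ℝ))
      = ∫ x : Fin n → ℝ, (pnorm N n x) ^ (-(N : ℝ)) * gg N f x :=
        integral_congr_ae (ae_of_all _ fun x => b_pow_eq hN x)
    _ = - ∫ x : Fin n → ℝ,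
          Real.log (pnorm N n x) * (pnorm N n x) ^ (-(N : ℝ)) * EG N f x :=
        integral_F1_eq hf hN hNn hcs hsupp
    _ ≤ ∫ x : Fin n → ℝ,
          |Real.log (pnorm N n x) * (pnorm N n x) ^ (-(N : ℝ)) * EG N f x| := by
        have h1 : |∫ x : Fin n → ℝ,
            Real.log (pnorm N n x) * (pnorm N n x) ^ (-(N : ℝ)) * EG N f x|
            ≤ ∫ x : Fin n → ℝ,
              |Real.log (pnorm N n x) * (pnorm N n x) ^ (-(N : ℝ)) * EG N f x| := by
          have hni := norm_integral_le_integral_norm (μ := volume)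
            (fun x : Fin n → ℝ =>
              Real.log (pnorm N n x) * (pnorm N n x) ^ (-(N : ℝ)) * EG N f x)
          simp only [Real.norm_eq_abs] at hni
          exact hni
        have h2 := neg_abs_le (∫ x : Fin n → ℝ,
          Real.log (pnorm N n x) * (pnorm N n x) ^ (-(N : ℝ)) * EG N f x)
        linarith
    _ ≤ ∫ x : Fin n → ℝ, (N : ℝ) *
          ((|Real.log (pnorm N n x)| * ‖eul N n f x‖ / pnorm N n x)
            * (‖f x‖ / pnorm N n x) ^ ((N : ℝ) - 1)) :=
        integral_mono hi2.abs hintNab (fun x => F2_abs_le hN x)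
    _ = (N : ℝ) * ∫ x : Fin n → ℝ,
          ((|Real.log (pnorm N n x)| * ‖eul N n f x‖ / pnorm N n x)
            * (‖f x‖ / pnorm N n x) ^ ((N : ℝ) - 1)) := integral_const_mul _ _
    _ ≤ (N : ℝ) * ((∫ x : Fin n → ℝ,
            (|Real.log (pnorm N n x)| * ‖eul N n f x‖ / pnorm N n x) ^ (N : ℝ)) ^ (1/(N : ℝ))
          * (∫ x : Fin n → ℝ,
              ((‖f x‖ / pnorm N n x) ^ ((N : ℝ) - 1)) ^ q2) ^ (1/q2)) :=
        mul_le_mul_of_nonneg_left hHolder2 (by positivity)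
    _ = (N : ℝ) * (∫ x : Fin n → ℝ,
            (|Real.log (pnorm N n x)| * ‖eul N n f x‖ / pnorm N n x) ^ (N : ℝ)) ^ (1/(N : ℝ))
        * (∫ x : Fin n → ℝ, (‖f x‖ / pnorm N n x) ^ (N : ℝ)) ^ (1 - 1/(N : ℝ)) := by
        rw [hq2_eq, h1q2, mul_assoc]

end

end Stmt16Aux

open Stmt16Aux in
/-- Critical uncertainty type principle with a logarithmic weight. -/
theorem stmt16 (n N : ℕ) (q : ℝ) (hN1 : 1 < N) (hNn : N ≤ n)
    (hq : 1 / (N : ℝ) + 1 / q = 1)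
    (f : (Fin n → ℝ) → ℂ) (hf : ContDiff ℝ (⊤ : ℕ∞) f) (hcs : HasCompactSupport f)
    (hsupp : tsupport f ⊆ {x | pnorm N n x ≠ 0}) :
    ∫ x : Fin n → ℝ, ‖f x‖ ^ 2 ≤
      N * (∫ x : Fin n → ℝ,
          (|Real.log (pnorm N n x)| * ‖eul N n f x‖ / pnorm N n x) ^ (N : ℝ)) ^ (1 / (N : ℝ)) *
        (∫ x : Fin n → ℝ, (pnorm N n x * ‖f x‖) ^ q) ^ (1 / q) := by
  have hN2 : 2 ≤ N := hN1
  have hNR1 : (1:ℝ) < (N : ℝ) := by exact_mod_cast hN1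
  have hpt : ∀ x : Fin n → ℝ,
      ‖f x‖ ^ 2 = (‖f x‖ / pnorm N n x) * (pnorm N n x * ‖f x‖) := by
    intro x
    by_cases hr : pnorm N n x = 0
    · have hfx : f x = 0 := by
        by_contra hne
        have hx : x ∈ tsupport f :=
          subset_tsupport f (by simpa [Function.mem_support] using hne)
        exact (hsupp hx) hr
      simp [hfx, hr]
    · field_simp
  have hLHS : (∫ x : Fin n → ℝ, ‖f x‖ ^ 2)
      = ∫ x : Fin n → ℝ, (‖f x‖ / pnorm N n x) * (pnorm N n x * ‖f x‖) :=
    integral_congr_ae (ae_of_all _ hpt)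
  have hpq1 : Real.HolderConjugate (N : ℝ) q := by
    have h := hq
    rw [one_div, one_div] at h
    exact Real.holderConjugate_iff.mpr ⟨hNR1, h⟩
  have hb_zero : ∀ y ∉ tsupport f, ‖f y‖ / pnorm N n y = 0 := fun y hy => by
    rw [image_eq_zero_of_notMem_tsupport hy]; simp
  have hrb_zero : ∀ y ∉ tsupport f, pnorm N n y * ‖f y‖ = 0 := fun y hy => by
    rw [image_eq_zero_of_notMem_tsupport hy]; simp
  have hb_nonneg : ∀ x, 0 ≤ ‖f x‖ / pnorm N n x := fun x =>
    div_nonneg (norm_nonneg _) (pnorm_nonneg x)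
  have hHolder1 := integral_mul_le_Lp_mul_Lq_of_nonneg (μ := volume) hpq1
    (ae_of_all _ hb_nonneg)
    (ae_of_all _ (fun x => mul_nonneg (pnorm_nonneg x) (norm_nonneg _)))
    ((continuous_b hf hsupp).memLp_of_hasCompactSupport
      (hasCompactSupport_of_zero hcs hb_zero))
    ((continuous_pnorm.mul hf.continuous.norm).memLp_of_hasCompactSupport
      (hasCompactSupport_of_zero hcs hrb_zero))
  have hH0 : 0 ≤ ∫ x : Fin n → ℝ, (‖f x‖ / pnorm N n x) ^ (N : ℝ) :=
    integral_nonneg fun x => Real.rpow_nonneg (hb_nonneg x) _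
  have hA0 : 0 ≤ ∫ x : Fin n → ℝ,
      (|Real.log (pnorm N n x)| * ‖eul N n f x‖ / pnorm N n x) ^ (N : ℝ) :=
    integral_nonneg fun x => Real.rpow_nonneg
      (div_nonneg (mul_nonneg (abs_nonneg _) (norm_nonneg _)) (pnorm_nonneg x)) _
  have hB0 : 0 ≤ ∫ x : Fin n → ℝ, (pnorm N n x * ‖f x‖) ^ q :=
    integral_nonneg fun x => Real.rpow_nonneg
      (mul_nonneg (pnorm_nonneg x) (norm_nonneg _)) _
  have hkey : (∫ x : Fin n → ℝ, (‖f x‖ / pnorm N n x) ^ (N : ℝ)) ^ (1/(N : ℝ))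
      ≤ (N : ℝ) * (∫ x : Fin n → ℝ,
          (|Real.log (pnorm N n x)| * ‖eul N n f x‖ / pnorm N n x) ^ (N : ℝ)) ^ (1/(N : ℝ)) := by
    rcases eq_or_lt_of_le hH0 with h0 | hpos
    · rw [← h0, Real.zero_rpow (one_div_ne_zero (by positivity))]
      exact mul_nonneg (by positivity) (Real.rpow_nonneg hA0 _)
    · have hHle := H_le hf hN2 hNn hcs hsupp
      have hsplit : (∫ x : Fin n → ℝ, (‖f x‖ / pnorm N n x) ^ (N : ℝ))
          = (∫ x : Fin n → ℝ, (‖f x‖ / pnorm N n x) ^ (N : ℝ)) ^ (1/(N : ℝ))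
            * (∫ x : Fin n → ℝ, (‖f x‖ / pnorm N n x) ^ (N : ℝ)) ^ (1 - 1/(N : ℝ)) := by
        rw [← Real.rpow_add hpos, show (1/(N : ℝ) + (1 - 1/(N : ℝ))) = 1 by ring,
          Real.rpow_one]
      have h2 : (∫ x : Fin n → ℝ, (‖f x‖ / pnorm N n x) ^ (N : ℝ)) ^ (1/(N : ℝ))
            * (∫ x : Fin n → ℝ, (‖f x‖ / pnorm N n x) ^ (N : ℝ)) ^ (1 - 1/(N : ℝ))
          ≤ ((N : ℝ) * (∫ x : Fin n → ℝ,
              (|Real.log (pnorm N n x)| * ‖eul N n f x‖ / pnorm N n x) ^ (N : ℝ)) ^ (1/(N : ℝ)))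
            * (∫ x : Fin n → ℝ, (‖f x‖ / pnorm N n x) ^ (N : ℝ)) ^ (1 - 1/(N : ℝ)) := by
        rw [← hsplit]
        calc (∫ x : Fin n → ℝ, (‖f x‖ / pnorm N n x) ^ (N : ℝ))
            ≤ (N : ℝ) * (∫ x : Fin n → ℝ,
                (|Real.log (pnorm N n x)| * ‖eul N n f x‖ / pnorm N n x) ^ (N : ℝ)) ^ (1/(N : ℝ))
              * (∫ x : Fin n → ℝ, (‖f x‖ / pnorm N n x) ^ (N : ℝ)) ^ (1 - 1/(N : ℝ)) := hHle
          _ = _ := by ring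
      exact le_of_mul_le_mul_right h2 (Real.rpow_pos_of_pos hpos _)
  calc (∫ x : Fin n → ℝ, ‖f x‖ ^ 2)
      = ∫ x : Fin n → ℝ, (‖f x‖ / pnorm N n x) * (pnorm N n x * ‖f x‖) := hLHS
    _ ≤ (∫ x : Fin n → ℝ, (‖f x‖ / pnorm N n x) ^ (N : ℝ)) ^ (1/(N : ℝ))
        * (∫ x : Fin n → ℝ, (pnorm N n x * ‖f x‖) ^ q) ^ (1/q) := hHolder1
    _ ≤ ((N : ℝ) * (∫ x : Fin n → ℝ,
          (|Real.log (pnorm N n x)| * ‖eul N n f x‖ / pnorm N n x) ^ (N : ℝ)) ^ (1/(N : ℝ)))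
        * (∫ x : Fin n → ℝ, (pnorm N n x * ‖f x‖) ^ q) ^ (1/q) :=
        mul_le_mul_of_nonneg_right hkey (Real.rpow_nonneg hB0 _)
    _ = N * (∫ x : Fin n → ℝ,
          (|Real.log (pnorm N n x)| * ‖eul N n f x‖ / pnorm N n x) ^ (N : ℝ)) ^ (1 / (N : ℝ)) *
        (∫ x : Fin n → ℝ, (pnorm N n x * ‖f x‖) ^ q) ^ (1 / q) := by ring
end

section
/- For any $f \in C_0^\infty(\mathbb{R}^2 \setminus \{0\})$, the critical Heisenberg–Pauli–Weyl type uncertainty principle holds: $\left( \int_{\mathbb{R}^2} |f|^2 dx \right)^2 \le 4 \int_{\mathbb{R}^2} (\log|x|)^2 \, |\nabla f|^2 dx \, \int_{\mathbb{R}^2} |x|^2 |f|^2 dx$. -/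
open MeasureTheory Finset

noncomputable def gnorm (N n : ℕ) (f : (Fin n → ℝ) → ℂ) (x : Fin n → ℝ) : ℝ :=
  Real.sqrt (∑ j : Fin n, if (j : ℕ) < N then ‖fderiv ℝ f x (Pi.single j 1)‖ ^ 2 else 0)

namespace Stmt17Aux

abbrev E2 : Type := Fin 2 → ℝ

noncomputable def qq (x : E2) : ℝ := x 0 ^ 2 + x 1 ^ 2
noncomputable def LL (x : E2) : ℝ := Real.log (qq x)
noncomputable def FF (f : E2 → ℂ) (x : E2) : ℝ := ‖f x‖ ^ 2
noncomputable def dA (f : E2 → ℂ) (i : Fin 2) (x : E2) : ℝ := (fderiv ℝ f x (Pi.single i 1)).re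
noncomputable def dB (f : E2 → ℂ) (i : Fin 2) (x : E2) : ℝ := (fderiv ℝ f x (Pi.single i 1)).im
noncomputable def GG (f : E2 → ℂ) (x : E2) : ℝ :=
  dA f 0 x ^ 2 + dB f 0 x ^ 2 + dA f 1 x ^ 2 + dB f 1 x ^ 2
noncomputable def VV (i : Fin 2) (x : E2) : ℝ := x i * LL x / (2 * qq x)
noncomputable def phi (f : E2 → ℂ) (i : Fin 2) (x : E2) : ℝ := FF f x * VV i x
noncomputable def DF (f : E2 → ℂ) (i : Fin 2) (x : E2) : ℝ :=
  2 * ((f x).re * dA f i x + (f x).im * dB f i x)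
noncomputable def chi (f : E2 → ℂ) (i : Fin 2) (x : E2) : ℝ :=
  DF f i x * VV i x + FF f x * (LL x / (2 * qq x) + (x i) ^ 2 * (1 - LL x) / (qq x) ^ 2)
noncomputable def SS (f : E2 → ℂ) (x : E2) : ℝ := DF f 0 x * VV 0 x + DF f 1 x * VV 1 x
noncomputable def dd (f : E2 → ℂ) (x : E2) : ℝ := FF f x / qq x
noncomputable def uu (f : E2 → ℂ) (x : E2) : ℝ := (LL x / 2) ^ 2 * GG f x

lemma qq_nonneg (x : E2) : 0 ≤ qq x := by unfold qq; positivity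

lemma qq_eq_zero {x : E2} (h : qq x = 0) : x = 0 := by
  unfold qq at h
  have h0 : x 0 = 0 := by nlinarith [sq_nonneg (x 0), sq_nonneg (x 1)]
  have h1 : x 1 = 0 := by nlinarith [sq_nonneg (x 0), sq_nonneg (x 1)]
  funext j; fin_cases j <;> simp [h0, h1]

lemma qq_pos {x : E2} (h : x ≠ 0) : 0 < qq x := by
  rcases lt_or_eq_of_le (qq_nonneg x) with h' | h'
  · exact h'
  · exact absurd (qq_eq_zero h'.symm) h

lemma norm_sq_complex (z : ℂ) : ‖z‖ ^ 2 = z.re ^ 2 + z.im ^ 2 := by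
  rw [Complex.sq_norm, Complex.normSq_apply]; ring

section Main

variable {f : E2 → ℂ}

lemma FF_nonneg (x : E2) : 0 ≤ FF f x := by unfold FF; positivity
lemma GG_nonneg (x : E2) : 0 ≤ GG f x := by unfold GG; positivity
lemma dd_nonneg (x : E2) : 0 ≤ dd f x := div_nonneg (FF_nonneg x) (qq_nonneg x)
lemma uu_nonneg (x : E2) : 0 ≤ uu f x := mul_nonneg (sq_nonneg _) (GG_nonneg x)

lemma f_zero {x : E2} (hx : x ∉ tsupport f) : f x = 0 := image_eq_zero_of_notMem_tsupport hx

lemma fderiv_zero {x : E2} (hx : x ∉ tsupport f) : fderiv ℝ f x = 0 := by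
  have hopen : IsOpen (tsupport f)ᶜ := (isClosed_tsupport f).isOpen_compl
  have hev : f =ᶠ[nhds x] (fun _ => (0 : ℂ)) := by
    filter_upwards [hopen.mem_nhds hx] with y hy
    exact image_eq_zero_of_notMem_tsupport hy
  rw [hev.fderiv_eq, fderiv_fun_const]
  rfl

/-- Key integrability helper. -/
lemma integrable_aux (hcs : HasCompactSupport f) (hsupp : tsupport f ⊆ {x | x ≠ 0})
    (h : E2 → ℝ) (hcont : ContinuousOn h {x : E2 | x ≠ 0})
    (hvan : ∀ x ∉ tsupport f, h x = 0) : Integrable h := by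
  have hopen : IsOpen (tsupport f)ᶜ := (isClosed_tsupport f).isOpen_compl
  have hc : Continuous h := by
    rw [continuous_iff_continuousAt]
    intro x
    by_cases hx : x ∈ tsupport f
    · exact hcont.continuousAt (IsOpen.mem_nhds isOpen_ne (hsupp hx))
    · have hev : h =ᶠ[nhds x] (fun _ => (0:ℝ)) := by
        filter_upwards [hopen.mem_nhds hx] with y hy using hvan y hy
      exact ContinuousAt.congr (continuousAt_const) hev.symm
  exact hc.integrable_of_hasCompactSupport (HasCompactSupport.intro hcs hvan)

lemma cont_fderiv_apply (hf : ContDiff ℝ (⊤ : ℕ∞) f) (i : Fin 2) :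
    Continuous (fun x => fderiv ℝ f x (Pi.single i 1)) :=
  (hf.continuous_fderiv (by simp)).clm_apply continuous_const

lemma cont_dA (hf : ContDiff ℝ (⊤ : ℕ∞) f) (i : Fin 2) : Continuous (dA f i) :=
  Complex.continuous_re.comp (cont_fderiv_apply hf i)

lemma cont_dB (hf : ContDiff ℝ (⊤ : ℕ∞) f) (i : Fin 2) : Continuous (dB f i) :=
  Complex.continuous_im.comp (cont_fderiv_apply hf i)

lemma cont_qq : Continuous qq := by
  unfold qq; fun_prop

lemma contOn_LL : ContinuousOn LL {x : E2 | x ≠ 0} := by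
  intro x hx
  have : ContinuousAt LL x := by
    unfold LL
    exact (Real.continuousAt_log (ne_of_gt (qq_pos hx))).comp cont_qq.continuousAt
  exact this.continuousWithinAt

lemma cont_FF (hf : ContDiff ℝ (⊤ : ℕ∞) f) : Continuous (FF f) := by
  unfold FF
  have := hf.continuous
  fun_prop

lemma cont_GG (hf : ContDiff ℝ (⊤ : ℕ∞) f) : Continuous (GG f) := by
  unfold GG
  have h0a := cont_dA hf 0; have h0b := cont_dB hf 0
  have h1a := cont_dA hf 1; have h1b := cont_dB hf 1
  fun_prop

lemma cont_DF (hf : ContDiff ℝ (⊤ : ℕ∞) f) (i : Fin 2) : Continuous (DF f i) := by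
  unfold DF
  have h0a := cont_dA hf i; have h0b := cont_dB hf i
  have hfc : Continuous f := hf.continuous
  fun_prop

lemma contOn_VV (i : Fin 2) : ContinuousOn (VV i) {x : E2 | x ≠ 0} := by
  unfold VV
  apply ContinuousOn.div
  · exact (continuous_apply i).continuousOn.mul contOn_LL
  · exact (continuous_const.mul cont_qq).continuousOn
  · intro x hx
    simpa using ne_of_gt (qq_pos hx)

-- vanishing lemmas
lemma FF_zero {x : E2} (hx : x ∉ tsupport f) : FF f x = 0 := by
  unfold FF; rw [f_zero hx]; simp

lemma dA_zero {i : Fin 2} {x : E2} (hx : x ∉ tsupport f) : dA f i x = 0 := by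
  unfold dA; rw [fderiv_zero hx]; rfl

lemma dB_zero {i : Fin 2} {x : E2} (hx : x ∉ tsupport f) : dB f i x = 0 := by
  unfold dB; rw [fderiv_zero hx]; rfl

lemma GG_zero {x : E2} (hx : x ∉ tsupport f) : GG f x = 0 := by
  unfold GG; rw [dA_zero hx, dA_zero hx, dB_zero hx, dB_zero hx]; ring

lemma DF_zero {i : Fin 2} {x : E2} (hx : x ∉ tsupport f) : DF f i x = 0 := by
  unfold DF; rw [dA_zero hx, dB_zero hx]; ring

variable (hf : ContDiff ℝ (⊤ : ℕ∞) f) (hcs : HasCompactSupport f)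
  (hsupp : tsupport f ⊆ {x | x ≠ 0})

include hf hcs hsupp

-- integrability of all players
lemma int_FF : Integrable (FF f) := integrable_aux hcs hsupp _ (cont_FF hf).continuousOn
  (fun _ hx => FF_zero hx)

lemma int_qqFF : Integrable (fun x => qq x * FF f x) :=
  integrable_aux hcs hsupp _ (cont_qq.mul (cont_FF hf)).continuousOn
    (fun x hx => by rw [FF_zero hx]; ring)

lemma int_dd : Integrable (dd f) :=
  integrable_aux hcs hsupp _
    ((cont_FF hf).continuousOn.div cont_qq.continuousOn
      (fun x hx => ne_of_gt (qq_pos hx)))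
    (fun x hx => by unfold dd; rw [FF_zero hx]; simp)

lemma int_uu : Integrable (uu f) :=
  integrable_aux hcs hsupp _
    (((contOn_LL.div_const 2).pow 2).mul (cont_GG hf).continuousOn)
    (fun x hx => by unfold uu; rw [GG_zero hx]; ring)

lemma int_SS : Integrable (SS f) :=
  integrable_aux hcs hsupp _
    ((((cont_DF hf 0).continuousOn.mul (contOn_VV 0))).add
      (((cont_DF hf 1).continuousOn.mul (contOn_VV 1))))
    (fun x hx => by unfold SS; rw [DF_zero hx, DF_zero hx]; ring)

lemma int_phi (i : Fin 2) : Integrable (phi f i) :=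
  integrable_aux hcs hsupp _ ((cont_FF hf).continuousOn.mul (contOn_VV i))
    (fun x hx => by unfold phi; rw [FF_zero hx]; ring)

lemma int_chi (i : Fin 2) : Integrable (chi f i) :=
  integrable_aux hcs hsupp _
    (((cont_DF hf i).continuousOn.mul (contOn_VV i)).add
      ((cont_FF hf).continuousOn.mul
        ((contOn_LL.div (continuous_const.mul cont_qq).continuousOn
            (fun x hx => by simpa using ne_of_gt (qq_pos hx))).add
          ((((continuous_apply (i:Fin 2)).continuousOn.pow 2).mul
              (continuousOn_const.sub contOn_LL)).div
            ((cont_qq.continuousOn).pow 2)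
            (fun x hx => pow_ne_zero _ (ne_of_gt (qq_pos hx)))))))
    (fun x hx => by unfold chi; rw [DF_zero hx, FF_zero hx]; ring)

omit hf hcs hsupp

/-- the core derivative computation -/
lemma hasLineDeriv_phi (hf : ContDiff ℝ (⊤ : ℕ∞) f) (hsupp : tsupport f ⊆ {x | x ≠ 0})
    (i : Fin 2) (x : E2) :
    HasLineDerivAt ℝ (phi f i) (chi f i x) x (Pi.single i 1) := by
  set v : E2 := Pi.single i 1 with hv
  by_cases hx0 : x = 0
  · subst hx0
    have h0 : (0:E2) ∉ tsupport f := fun h => (hsupp h) rfl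
    have hopen : IsOpen (tsupport f)ᶜ := (isClosed_tsupport f).isOpen_compl
    have hev : phi f i =ᶠ[nhds (0:E2)] (fun _ => (0:ℝ)) := by
      filter_upwards [hopen.mem_nhds h0] with y hy
      unfold phi; rw [FF_zero hy]; ring
    have hfd : HasFDerivAt (phi f i) (0 : E2 →L[ℝ] ℝ) 0 :=
      (hasFDerivAt_const (0:ℝ) (0:E2)).congr_of_eventuallyEq hev
    have hld := hfd.hasLineDerivAt v
    have hchi : chi f i 0 = 0 := by
      unfold chi VV
      rw [FF_zero h0]
      simp
    rw [hchi]
    simpa using hld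
  · have hq : qq x ≠ 0 := ne_of_gt (qq_pos hx0)
    have hcx : x + (0:ℝ) • v = x := by simp
    have hc : HasDerivAt (fun t : ℝ => x + t • v) v 0 := by
      simpa using ((hasDerivAt_id (0:ℝ)).smul_const v).const_add x
    have hdf : HasFDerivAt f (fderiv ℝ f x) (x + (0:ℝ) • v) := by
      rw [hcx]; exact (hf.differentiable (by simp) x).hasFDerivAt
    have hfc : HasDerivAt (fun t : ℝ => f (x + t • v)) (fderiv ℝ f x v) 0 := by
      exact hdf.comp_hasDerivAt (0:ℝ) hc
    have hA : HasDerivAt (fun t : ℝ => (f (x + t • v)).re) (dA f i x) 0 := by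
      have := Complex.reCLM.hasFDerivAt.comp_hasDerivAt (0:ℝ) hfc
      exact this
    have hB : HasDerivAt (fun t : ℝ => (f (x + t • v)).im) (dB f i x) 0 := by
      have := Complex.imCLM.hasFDerivAt.comp_hasDerivAt (0:ℝ) hfc
      exact this
    have hF : HasDerivAt (fun t : ℝ => FF f (x + t • v)) (DF f i x) 0 := by
      have heq : (fun t : ℝ => FF f (x + t • v))
          = fun t => (f (x + t • v)).re ^ 2 + (f (x + t • v)).im ^ 2 := by
        funext t; exact norm_sq_complex _
      rw [heq]
      have h2 := (hA.pow 2).add (hB.pow 2)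
      refine h2.congr_deriv ?_
      unfold DF
      rw [hcx]
      push_cast
      ring
    have hXj : ∀ j : Fin 2, HasDerivAt (fun t : ℝ => (x + t • v) j) (v j) 0 := by
      intro j
      have heq : (fun t : ℝ => (x + t • v) j) = fun t => x j + t * v j := by
        funext t; simp
      rw [heq]
      simpa using ((hasDerivAt_id (0:ℝ)).mul_const (v j)).const_add (x j)
    have hqc : HasDerivAt (fun t : ℝ => qq (x + t • v)) (2 * x i) 0 := by
      have h2 := ((hXj 0).pow 2).add ((hXj 1).pow 2)
      have heq : (fun t : ℝ => qq (x + t • v))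
          = fun t => ((x + t • v) 0) ^ 2 + ((x + t • v) 1) ^ 2 := by
        funext t; rfl
      rw [heq]
      refine h2.congr_deriv ?_
      rw [hcx]
      have : v 0 * x 0 + v 1 * x 1 = x i := by
        fin_cases i <;> simp [hv, Pi.single_apply]
      push_cast
      nlinarith [this]
    have hLc : HasDerivAt (fun t : ℝ => LL (x + t • v)) (2 * x i / qq x) 0 := by
      have := hqc.log (by rwa [hcx])
      have heq : (fun t : ℝ => LL (x + t • v)) = fun t => Real.log (qq (x + t • v)) := rfl
      rw [heq]
      convert this using 2
      rw [hcx]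
    have hnum : HasDerivAt (fun t : ℝ => (x + t • v) i * LL (x + t • v))
        (v i * LL x + x i * (2 * x i / qq x)) 0 := by
      have := (hXj i).mul hLc
      refine this.congr_deriv ?_
      rw [hcx]
    have hden : HasDerivAt (fun t : ℝ => 2 * qq (x + t • v)) (2 * (2 * x i)) 0 :=
      hqc.const_mul 2
    have hVc : HasDerivAt (fun t : ℝ => VV i (x + t • v))
        (LL x / (2 * qq x) + (x i) ^ 2 * (1 - LL x) / (qq x) ^ 2) 0 := by
      have hden0 : (fun t : ℝ => 2 * qq (x + t • v)) 0 ≠ 0 := by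
        simp only [hcx]; simpa using hq
      have := hnum.div hden hden0
      have heq : (fun t : ℝ => VV i (x + t • v))
          = fun t => ((x + t • v) i * LL (x + t • v)) / (2 * qq (x + t • v)) := rfl
      rw [heq]
      refine this.congr_deriv ?_
      simp only [hcx]
      have hvi : v i = 1 := by simp [hv]
      rw [hvi]
      field_simp
      ring
    have hfinal := hF.mul hVc
    have heq : (fun t : ℝ => phi f i (x + t • v))
        = fun t => FF f (x + t • v) * VV i (x + t • v) := rfl
    show HasDerivAt (fun t : ℝ => phi f i (x + t • v)) (chi f i x) 0
    rw [heq]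
    refine hfinal.congr_deriv ?_
    simp only [hcx]
    unfold chi VV
    ring

/-- integration by parts: integral of a line derivative of an integrable function vanishes -/
lemma integral_lineDeriv_eq_zero {φ χ : E2 → ℝ} (v : E2)
    (hd : ∀ x, HasLineDerivAt ℝ φ (χ x) x v)
    (h1 : Integrable φ) (h2 : Integrable χ) : ∫ x : E2, χ x = 0 := by
  have hg : ∀ x : E2, HasLineDerivAt ℝ (fun _ : E2 => (1:ℝ)) 0 x v := by
    intro x
    simpa using (hasFDerivAt_const (1:ℝ) x).hasLineDerivAt v
  have key := integral_bilinear_hasLineDerivAt_right_eq_neg_left_of_integrable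
      (μ := (volume : Measure E2)) (B := ContinuousLinearMap.mul ℝ ℝ)
      (f := φ) (f' := χ) (g := fun _ => (1:ℝ)) (g' := fun _ => (0:ℝ)) (v := v)
      (by simpa using h2) (by simpa using (integrable_zero E2 ℝ volume))
      (by simpa using h1) (fun x _ => hd x) (fun x _ => hg x)
  simp only [ContinuousLinearMap.mul_apply', mul_zero, mul_one, integral_zero] at key
  linarith

/-- pointwise identity: sum of the chi's -/
lemma chi_sum (hsupp : tsupport f ⊆ {x | x ≠ 0}) (x : E2) :
    chi f 0 x + chi f 1 x = dd f x + SS f x := by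
  by_cases hx0 : x = 0
  · subst hx0
    have h0 : (0:E2) ∉ tsupport f := fun h => (hsupp h) rfl
    have hf0 : FF f 0 = 0 := by unfold FF; rw [f_zero h0]; simp
    unfold chi dd SS VV
    rw [hf0]
    norm_num
  · have hq : qq x ≠ 0 := ne_of_gt (qq_pos hx0)
    have hexp : x 0 ^ 2 + x 1 ^ 2 = qq x := rfl
    have hkey : LL x / (2 * qq x) + x 0 ^ 2 * (1 - LL x) / qq x ^ 2
        + (LL x / (2 * qq x) + x 1 ^ 2 * (1 - LL x) / qq x ^ 2) = 1 / qq x := by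
      have e1 : LL x / (2 * qq x) + x 0 ^ 2 * (1 - LL x) / qq x ^ 2
          + (LL x / (2 * qq x) + x 1 ^ 2 * (1 - LL x) / qq x ^ 2)
          = LL x / qq x + (x 0 ^ 2 + x 1 ^ 2) * ((1 - LL x) / qq x ^ 2) := by
        field_simp
        ring
      rw [e1, hexp]
      field_simp
      ring
    have e2 : chi f 0 x + chi f 1 x = SS f x
        + FF f x * (LL x / (2 * qq x) + x 0 ^ 2 * (1 - LL x) / qq x ^ 2
          + (LL x / (2 * qq x) + x 1 ^ 2 * (1 - LL x) / qq x ^ 2)) := by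
      unfold chi SS; ring
    rw [e2, hkey]
    unfold dd
    field_simp
    ring

/-- pointwise Cauchy-Schwarz estimate for the divergence term -/
lemma pointwise_bound (x : E2) :
    -SS f x ≤ 2 * uu f x + dd f x / 2 := by
  by_cases hx0 : x = 0
  · subst hx0
    have hS : SS f 0 = 0 := by
      unfold SS VV
      norm_num
    rw [hS, neg_zero]
    have := uu_nonneg (f := f) (0:E2)
    have := dd_nonneg (f := f) (0:E2)
    linarith
  · have hq : 0 < qq x := qq_pos hx0
    set a := (f x).re; set b := (f x).im
    set p0 := dA f 0 x; set r0 := dB f 0 x; set p1 := dA f 1 x; set r1 := dB f 1 x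
    set T := x 0 * DF f 0 x + x 1 * DF f 1 x with hT
    have hCS : T ^ 2 ≤ 4 * (qq x * (FF f x * GG f x)) := by
      have hFF : FF f x = a ^ 2 + b ^ 2 := norm_sq_complex _
      have hGG : GG f x = p0 ^ 2 + r0 ^ 2 + p1 ^ 2 + r1 ^ 2 := rfl
      have hqq : qq x = x 0 ^ 2 + x 1 ^ 2 := rfl
      have hDF0 : DF f 0 x = 2 * (a * p0 + b * r0) := rfl
      have hDF1 : DF f 1 x = 2 * (a * p1 + b * r1) := rfl
      rw [hT, hFF, hGG, hqq, hDF0, hDF1]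
      nlinarith [sq_nonneg (x 0 * a * r0 - x 0 * b * p0), sq_nonneg (x 0 * a * p1 - x 1 * a * p0),
        sq_nonneg (x 0 * a * r1 - x 1 * b * p0), sq_nonneg (x 0 * b * p1 - x 1 * a * r0),
        sq_nonneg (x 0 * b * r1 - x 1 * b * r0), sq_nonneg (x 1 * a * r1 - x 1 * b * p1)]
    have hS : SS f x = LL x / (2 * qq x) * T := by
      unfold SS VV
      rw [hT]
      field_simp
    have hSsq : SS f x ^ 2 ≤ 4 * uu f x * dd f x := by
      have e1 : SS f x ^ 2 = (LL x) ^ 2 * T ^ 2 / (4 * qq x ^ 2) := by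
        rw [hS]; field_simp; ring
      have e2 : 4 * uu f x * dd f x
          = (LL x) ^ 2 * (4 * (qq x * (FF f x * GG f x))) / (4 * qq x ^ 2) := by
        unfold uu dd; field_simp; ring
      rw [e1, e2]
      apply (div_le_div_iff_of_pos_right (by positivity)).mpr
      exact mul_le_mul_of_nonneg_left hCS (sq_nonneg _)
    have huu := uu_nonneg (f := f) x
    have hdd := dd_nonneg (f := f) x
    have hR : SS f x ^ 2 ≤ (2 * uu f x + dd f x / 2) ^ 2 := by
      nlinarith [sq_nonneg (2 * uu f x - dd f x / 2)]
    have habs := abs_le_of_sq_le_sq hR (by linarith)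
    linarith [abs_le.mp habs]

/-- pointwise AM-GM for the Cauchy-Schwarz step -/
lemma pointwise_amgm (hsupp : tsupport f ⊆ {x | x ≠ 0}) {t s : ℝ}
    (ht : 0 < t) (hs : 0 < s) (hts : t * s = 1) (x : E2) :
    FF f x ≤ t / 2 * dd f x + s / 2 * (qq x * FF f x) := by
  by_cases hq0 : qq x = 0
  · have hx0 : x = 0 := qq_eq_zero hq0
    subst hx0
    have h0 : (0:E2) ∉ tsupport f := fun h => (hsupp h) rfl
    have hf0 : FF f 0 = 0 := by unfold FF; rw [f_zero h0]; simp
    unfold dd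
    rw [hf0]
    simp
  · have hq : 0 < qq x := lt_of_le_of_ne (qq_nonneg x) (Ne.symm hq0)
    have hdq : dd f x * qq x = FF f x := div_mul_cancel₀ _ hq0
    have hd := dd_nonneg (f := f) x
    refine le_of_mul_le_mul_left ?_ (show (0:ℝ) < 2 * s by positivity)
    have hst : s * t = 1 := by rw [mul_comm]; exact hts
    have hexp : 2 * s * (t / 2 * dd f x + s / 2 * (qq x * FF f x))
        = (s * t) * dd f x + s ^ 2 * (qq x * FF f x) := by ring
    rw [hexp, hst, one_mul, ← hdq]
    nlinarith [mul_nonneg hd (sq_nonneg (1 - s * qq x))]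

variable (hf : ContDiff ℝ (⊤ : ℕ∞) f) (hcs : HasCompactSupport f)
  (hsupp : tsupport f ⊆ {x | x ≠ 0})

include hf hcs hsupp

/-- the critical Hardy inequality -/
lemma hardy : ∫ x : E2, dd f x ≤ 4 * ∫ x : E2, uu f x := by
  have h0 : ∫ x : E2, chi f 0 x = 0 :=
    integral_lineDeriv_eq_zero (Pi.single 0 1) (hasLineDeriv_phi hf hsupp 0)
      (int_phi hf hcs hsupp 0) (int_chi hf hcs hsupp 0)
  have h1 : ∫ x : E2, chi f 1 x = 0 :=
    integral_lineDeriv_eq_zero (Pi.single 1 1) (hasLineDeriv_phi hf hsupp 1)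
      (int_phi hf hcs hsupp 1) (int_chi hf hcs hsupp 1)
  have hsum : (fun x : E2 => chi f 0 x + chi f 1 x) = fun x => dd f x + SS f x :=
    funext (chi_sum hsupp)
  have h2 : (∫ x : E2, dd f x) + ∫ x : E2, SS f x = 0 := by
    rw [← integral_add (int_dd hf hcs hsupp) (int_SS hf hcs hsupp), ← hsum,
      integral_add (int_chi hf hcs hsupp 0) (int_chi hf hcs hsupp 1), h0, h1, add_zero]
  have h3 : ∫ x : E2, -SS f x ≤ ∫ x : E2, (2 * uu f x + dd f x / 2) :=
    integral_mono (int_SS hf hcs hsupp).neg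
      (((int_uu hf hcs hsupp).const_mul 2).add ((int_dd hf hcs hsupp).div_const 2))
      (fun x => pointwise_bound x)
  rw [integral_neg, integral_add ((int_uu hf hcs hsupp).const_mul 2)
      ((int_dd hf hcs hsupp).div_const 2), integral_const_mul, integral_div] at h3
  linarith

/-- the Cauchy-Schwarz step -/
lemma cs_step : (∫ x : E2, FF f x) ^ 2
    ≤ (∫ x : E2, dd f x) * ∫ x : E2, qq x * FF f x := by
  set P := ∫ x : E2, FF f x with hP
  set D := ∫ x : E2, dd f x with hD
  set C := ∫ x : E2, qq x * FF f x with hC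
  have hP0 : 0 ≤ P := integral_nonneg (fun x => FF_nonneg x)
  have hD0 : 0 ≤ D := integral_nonneg (fun x => dd_nonneg x)
  have hC0 : 0 ≤ C := integral_nonneg (fun x => mul_nonneg (qq_nonneg x) (FF_nonneg x))
  clear_value P D C
  have key : ∀ t s : ℝ, 0 < t → 0 < s → t * s = 1 → P ≤ t / 2 * D + s / 2 * C := by
    intro t s ht hs hts
    rw [hP, hD, hC]
    have hmono : (∫ x : E2, FF f x) ≤ ∫ x : E2, (t / 2 * dd f x + s / 2 * (qq x * FF f x)) :=
      integral_mono (int_FF hf hcs hsupp)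
        (((int_dd hf hcs hsupp).const_mul _).add ((int_qqFF hf hcs hsupp).const_mul _))
        (fun x => pointwise_amgm hsupp ht hs hts x)
    rwa [integral_add ((int_dd hf hcs hsupp).const_mul _)
      ((int_qqFF hf hcs hsupp).const_mul _), integral_const_mul, integral_const_mul] at hmono
  by_cases hPz : P = 0
  · rw [hPz]
    simpa using mul_nonneg hD0 hC0
  · have hPpos : 0 < P := lt_of_le_of_ne hP0 (Ne.symm hPz)
    by_cases hDz : D = 0
    · exfalso
      have hC1 : (0:ℝ) < C + 1 := by linarith
      have hts1 : (C + 1) / P * (P / (C + 1)) = 1 := by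
        field_simp
      have h := key ((C + 1) / P) (P / (C + 1)) (div_pos hC1 hPpos) (div_pos hPpos hC1) hts1
      rw [hDz, mul_zero, zero_add] at h
      have he : P / (C + 1) / 2 * C = P * C / (2 * (C + 1)) := by
        rw [div_div, div_mul_eq_mul_div, mul_comm (C + 1) 2]
      have hlt : P * C / (2 * (C + 1)) < P := by
        rw [div_lt_iff₀ (by linarith)]
        nlinarith
      rw [he] at h
      linarith
    · have hDpos : 0 < D := lt_of_le_of_ne hD0 (Ne.symm hDz)
      by_cases hCz : C = 0
      · exfalso
        have hD1 : (0:ℝ) < D + 1 := by linarith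
        have hts1 : P / (D + 1) * ((D + 1) / P) = 1 := by
          field_simp
        have h := key (P / (D + 1)) ((D + 1) / P) (div_pos hPpos hD1) (div_pos hD1 hPpos) hts1
        rw [hCz, mul_zero, add_zero] at h
        have he : P / (D + 1) / 2 * D = P * D / (2 * (D + 1)) := by
          rw [div_div, div_mul_eq_mul_div, mul_comm (D + 1) 2]
        have hlt : P * D / (2 * (D + 1)) < P := by
          rw [div_lt_iff₀ (by linarith)]
          nlinarith
        rw [he] at h
        linarith
      · have hCpos : 0 < C := lt_of_le_of_ne hC0 (Ne.symm hCz)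
        set t := Real.sqrt (C / D) with htdef
        set s := Real.sqrt (D / C) with hsdef
        have hCD : 0 < C / D := div_pos hCpos hDpos
        have hDC : 0 < D / C := div_pos hDpos hCpos
        have ht : 0 < t := Real.sqrt_pos.mpr hCD
        have hs : 0 < s := Real.sqrt_pos.mpr hDC
        have hts : t * s = 1 := by
          rw [htdef, hsdef, ← Real.sqrt_mul hCD.le]
          rw [show C / D * (D / C) = 1 by field_simp]
          exact Real.sqrt_one
        have ht2 : t ^ 2 * D = C := by
          rw [htdef, Real.sq_sqrt hCD.le]
          field_simp
        have hs2 : s ^ 2 * C = D := by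
          rw [hsdef, Real.sq_sqrt hDC.le]
          field_simp
        have hkey := key t s ht hs hts
        have hsq : P ^ 2 ≤ (t / 2 * D + s / 2 * C) ^ 2 := by
          apply pow_le_pow_left₀ hP0 hkey
        have e : (t / 2 * D + s / 2 * C) ^ 2 = D * C := by
          linear_combination (D / 4) * ht2 + (C / 4) * hs2 + (D * C / 2) * hts
        rw [e] at hsq
        exact hsq

end Main

end Stmt17Aux

/-- Critical Heisenberg–Pauli–Weyl type uncertainty principle on the plane. -/
theorem stmt17 (f : (Fin 2 → ℝ) → ℂ) (hf : ContDiff ℝ (⊤ : ℕ∞) f) (hcs : HasCompactSupport f)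
    (hsupp : tsupport f ⊆ {x | x ≠ 0}) :
    (∫ x : Fin 2 → ℝ, ‖f x‖ ^ 2) ^ 2 ≤
      4 * (∫ x : Fin 2 → ℝ, (Real.log (pnorm 2 2 x)) ^ 2 * (gnorm 2 2 f x) ^ 2) *
        ∫ x : Fin 2 → ℝ, (pnorm 2 2 x) ^ 2 * ‖f x‖ ^ 2 := by
  open Stmt17Aux in
  have hpn : ∀ x : Fin 2 → ℝ, pnorm 2 2 x = Real.sqrt (qq x) := by
    intro x
    unfold pnorm qq
    congr 1
    rw [Fin.sum_univ_two]
    norm_num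
  have e1 : (fun x : Fin 2 → ℝ => (Real.log (pnorm 2 2 x)) ^ 2 * (gnorm 2 2 f x) ^ 2)
      = uu f := by
    funext x
    have hlog : Real.log (pnorm 2 2 x) = LL x / 2 := by
      rw [hpn x, Real.log_sqrt (qq_nonneg x)]
      rfl
    have hgn : (gnorm 2 2 f x) ^ 2 = GG f x := by
      unfold gnorm
      rw [Real.sq_sqrt (Finset.sum_nonneg (fun j _ => by positivity)), Fin.sum_univ_two]
      norm_num
      rw [Complex.sq_norm, Complex.sq_norm, Complex.normSq_apply, Complex.normSq_apply]
      unfold GG dA dB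
      ring
    rw [hlog, hgn]
    rfl
  have e2 : (fun x : Fin 2 → ℝ => (pnorm 2 2 x) ^ 2 * ‖f x‖ ^ 2)
      = fun x => qq x * FF f x := by
    funext x
    rw [hpn x, Real.sq_sqrt (qq_nonneg x)]
    rfl
  have e0 : (fun x : Fin 2 → ℝ => ‖f x‖ ^ 2) = FF f := rfl
  rw [e0, e1, e2]
  have hB := hardy hf hcs hsupp
  have hCS := cs_step hf hcs hsupp
  have hC0 : 0 ≤ ∫ x : E2, qq x * FF f x :=
    integral_nonneg (fun x => mul_nonneg (qq_nonneg x) (FF_nonneg x))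
  calc (∫ x : E2, FF f x) ^ 2 ≤ (∫ x : E2, dd f x) * ∫ x : E2, qq x * FF f x := hCS
    _ ≤ (4 * ∫ x : E2, uu f x) * ∫ x : E2, qq x * FF f x :=
        mul_le_mul_of_nonneg_right hB hC0
    _ = 4 * (∫ x : E2, uu f x) * ∫ x : E2, qq x * FF f x := by ring
end
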